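/- arXiv:2306.05393 — 4 statements merged into one kernel-verified Lean document; each statement's English description precedes it below -/
import Mathlib

section
/- Let C be a symmetric monoidal stable ∞-category and A an algebra in C. If the Amitsur (cobar) complex of A is d-rapidly convergent to the unit 𝟙 (condition (1)_d), then the canonical map 𝟙 → Tot_d(A^{⊗•+1}) admits a retraction (condition (2)_d). -/
open CategoryTheory Limits Pretriangulated MonoidalCategory

universe v u

variable (C : Type u) [Category.{v} C]

section
variable [Preadditive C] [HasZeroObject C] [HasShift C ℤ]
  [∀ n : ℤ, (CategoryTheory.shiftFunctor C n).Additive] [Pretriangulated C]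

/-- Fibre data for the comparison map from a constant tower `{Yinf}` to a tower `{Y n}`:
a choice of fibres `F n = fib(Yinf → Y n)`, functorially in `n`. -/
structure TowerFiberData (Y : ℕ → C) (t : ∀ n, Y (n + 1) ⟶ Y n)
    (Yinf : C) (f : ∀ n, Yinf ⟶ Y n) where
  F : ℕ → C
  ft : ∀ n, F (n + 1) ⟶ F n
  ι : ∀ n, F n ⟶ Yinf
  δ : ∀ n, Y n ⟶ (F n)⟦(1 : ℤ)⟧
  tri : ∀ n, Triangle.mk (ι n) (f n) (δ n) ∈ distTriang C
  comm : ∀ n, ft n ≫ ι n = ι (n + 1)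
  sqδ : ∀ n, t n ≫ δ n = δ (n + 1) ≫ (CategoryTheory.shiftFunctor C (1 : ℤ)).map (ft n)

variable {C}

/-- The `k`-fold composite `F (n + k) ⟶ F n` in the tower of fibres. -/
def TowerFiberData.cmp {Y : ℕ → C} {t : ∀ n, Y (n + 1) ⟶ Y n} {Yinf : C}
    {f : ∀ n, Yinf ⟶ Y n} (D : TowerFiberData C Y t Yinf f) :
    ∀ n k : ℕ, D.F (n + k) ⟶ D.F n
  | _, 0 => 𝟙 _
  | n, k + 1 => D.ft (n + k) ≫ D.cmp n k

variable (C)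

/-- A tower `{Y n}` is *`d`-rapidly convergent* to `Yinf` if there is fibre data for which
every `d`-fold composite in the tower of fibres is null. -/
def RapidlyConvergent (Y : ℕ → C) (t : ∀ n, Y (n + 1) ⟶ Y n)
    (Yinf : C) (f : ∀ n, Yinf ⟶ Y n) (d : ℕ) : Prop :=
  ∃ D : TowerFiberData C Y t Yinf f, ∀ n, D.cmp n d = 0

end

section
variable [MonoidalCategory C]

/-- `A^{⊗(n+1)}`. -/
def tensorPow (A : C) : ℕ → C
  | 0 => A
  | n + 1 => tensorPow A n ⊗ A

/-- The `Tot`-tower of the cobar (Amitsur) complex `R^{⊗•+1} ⊗ M`: a cosimplicial object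
whose `n`-th term is `R^{⊗(n+1)} ⊗ M`, partial totalizations `Tot n` realised as limits over
the truncated simplex categories, and the canonical augmentation maps `f n : M ⟶ Tot n`. -/
structure CobarTotTower (R M : C) where
  X : CosimplicialObject C
  hX : ∀ n : ℕ, X.obj (SimplexCategory.mk n) ≅ tensorPow C R n ⊗ M
  Tot : ℕ → C
  t : ∀ n, Tot (n + 1) ⟶ Tot n
  cone : ∀ n : ℕ, Cone (SimplexCategory.Truncated.inclusion n ⋙ X)
  hpt : ∀ n, (cone n).pt = Tot n
  hlim : ∀ n, IsLimit (cone n)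
  f : ∀ n, M ⟶ Tot n
  compat : ∀ n, f (n + 1) ≫ t n = f n

end

/-! The map `fib(𝟙 → Tot_d) → 𝟙` factors as `fib(𝟙 → Tot_d) → fib(𝟙 → Tot_0) → 𝟙`, whose first
factor is a `d`-fold composite in the tower of fibres and hence null. So the fibre map is zero,
`𝟙 → Tot_d` is a monomorphism by the long exact sequence of its triangle, and monomorphisms
split in a triangulated category. -/

namespace TowerFiberData

variable {C} [Preadditive C] [HasZeroObject C] [HasShift C ℤ]
  [∀ n : ℤ, (CategoryTheory.shiftFunctor C n).Additive] [Pretriangulated C]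
  {Y : ℕ → C} {t : ∀ n, Y (n + 1) ⟶ Y n} {Yinf : C} {f : ∀ n, Yinf ⟶ Y n}
  (D : TowerFiberData C Y t Yinf f)

lemma cmp_comp_ι (n k : ℕ) : D.cmp n k ≫ D.ι n = D.ι (n + k) := by
  induction k with
  | zero => exact Category.id_comp _
  | succ k ih => rw [cmp, Category.assoc, ih, D.comm]; rfl

lemma ι_eq_zero_of_cmp_eq_zero {d : ℕ} (h : D.cmp 0 d = 0) : D.ι d = 0 := by
  have h₀ := D.cmp_comp_ι 0 d
  rw [h, zero_comp] at h₀
  rw [← Nat.zero_add d]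
  exact h₀.symm

end TowerFiberData

variable {C} in
lemma RapidlyConvergent.mono [Preadditive C] [HasZeroObject C] [HasShift C ℤ]
    [∀ n : ℤ, (CategoryTheory.shiftFunctor C n).Additive] [Pretriangulated C]
    {Y : ℕ → C} {t : ∀ n, Y (n + 1) ⟶ Y n} {Yinf : C} {f : ∀ n, Yinf ⟶ Y n} {d : ℕ}
    (h : RapidlyConvergent C Y t Yinf f d) : Mono (f d) := by
  obtain ⟨D, hD⟩ := h
  exact Triangle.mono₂ _ (D.tri d) (D.ι_eq_zero_of_cmp_eq_zero (hD 0))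

/-- Let `C` be a symmetric monoidal stable ∞-category and `A` an algebra in
`C`.  If the Amitsur (cobar) complex of `A` is `d`-rapidly convergent to the unit `𝟙`
(condition `(1)_d`), then the canonical map `𝟙 → Tot_d (A^{⊗•+1})` admits a retraction
(condition `(2)_d`). -/
theorem amitsur_rapid_convergence_gives_retraction
    [Preadditive C] [HasZeroObject C] [HasShift C ℤ]
    [∀ n : ℤ, (CategoryTheory.shiftFunctor C n).Additive] [Pretriangulated C]
    [MonoidalCategory C]
    (A : Mon C) (T : CobarTotTower C A.X (𝟙_ C)) (d : ℕ)
    (h : RapidlyConvergent C T.Tot T.t (𝟙_ C) T.f d) :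
    ∃ r : T.Tot d ⟶ 𝟙_ C, T.f d ≫ r = 𝟙 (𝟙_ C) := by
  have := h.mono
  have := isSplitMono_of_mono (T.f d)
  exact ⟨retraction (T.f d), IsSplitMono.id (T.f d)⟩
end

section
/- Let C be a stable ∞-category and X → Y → Z a cofibre sequence of towers (functors ℤ≥0^op → C) with specified maps from constant towers X_∞, Y_∞, Z_∞ forming a cofibre sequence compatible with the tower maps. If the tower for X is r-rapidly convergent and the tower for Z is r'-rapidly convergent, then the tower for Y is (r+r')-rapidly convergent. -/
open CategoryTheory Limits Pretriangulated MonoidalCategory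

universe v u

variable (C : Type u) [Category.{v} C]

/-! Rapid convergence can be read off the tower without choosing fibres: for a cone `π` from
`Y∞` to a tower `Y`, the fibre map `F j ⟶ Y∞` vanishes iff `π j` is mono, and the transition map
`Y j ⟶ Y i` kills `δ i : Y i ⟶ F i⟦1⟧` iff it factors through `π i`, and these two facts force
the composite `F j ⟶ F i` to vanish. Both conditions pass from the outer terms of a cofibre
sequence of towers to the middle one by diagram chases in the long exact sequences of the
levelwise triangles and of the constant one: the `r'`-step factorisation for `Z` combined with
monomorphy for `X` gives monomorphy for `Y`, and the `r'`-step factorisation for `Z` and the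
`r`-step one for `X` splice to an `(r + r')`-step factorisation for `Y`. -/

open Opposite

section

variable {C}

structure CategoryTheory.Limits.Cone.IsRapidlyConvergent {Y : ℕᵒᵖ ⥤ C} (c : Cone Y) (d : ℕ) :
    Prop where
  mono_π : ∀ j, d ≤ j → Mono (c.π.app (Opposite.op j))
  exists_factor : ∀ i j (h : i + d ≤ j), ∃ σ : Y.obj (Opposite.op j) ⟶ c.pt,
    Y.map (homOfLE ((Nat.le_add_right i d).trans h)).op = σ ≫ c.π.app (Opposite.op i)

variable [Preadditive C] [HasZeroObject C] [HasShift C ℤ]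
  [∀ n : ℤ, (CategoryTheory.shiftFunctor C n).Additive] [Pretriangulated C]

lemma CategoryTheory.Pretriangulated.Triangle.mono_hom₂_of_mono_of_factors
    {T₀ Ta Tb : Triangle C} (hT₀ : T₀ ∈ distTriang C) (hTb : Tb ∈ distTriang C)
    (φa : T₀ ⟶ Ta) (φb : T₀ ⟶ Tb) (τ : Tb ⟶ Ta) (hφ : φb ≫ τ = φa)
    [Mono φa.hom₁] [Mono φb.hom₃] (σ : Tb.obj₃ ⟶ T₀.obj₃) (hσ : τ.hom₃ = σ ≫ φa.hom₃) :
    Mono φb.hom₂ := by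
  refine Preadditive.mono_of_cancel_zero _ fun g hg => ?_
  have hg₂ : g ≫ T₀.mor₂ = 0 := by
    rw [← cancel_mono φb.hom₃, Category.assoc, φb.comm₂, reassoc_of% hg, zero_comp, zero_comp]
  obtain ⟨l, rfl⟩ := Triangle.coyoneda_exact₂ T₀ hT₀ g hg₂
  have hl : (l ≫ φb.hom₁) ≫ Tb.mor₁ = 0 := by simpa using hg
  obtain ⟨θ, hθ⟩ := Triangle.coyoneda_exact₁ Tb hTb ((l ≫ φb.hom₁)⟦(1 : ℤ)⟧')
    (by rw [← Functor.map_comp, hl, Functor.map_zero])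
  have hl' : l⟦(1 : ℤ)⟧' = θ ≫ σ ≫ T₀.mor₃ := by
    rw [← cancel_mono (φa.hom₁⟦(1 : ℤ)⟧')]
    calc l⟦(1 : ℤ)⟧' ≫ φa.hom₁⟦(1 : ℤ)⟧' = (l ≫ φb.hom₁)⟦(1 : ℤ)⟧' ≫ τ.hom₁⟦(1 : ℤ)⟧' := by
          simp [← hφ]
      _ = θ ≫ σ ≫ φa.hom₃ ≫ Ta.mor₃ := by rw [hθ, Category.assoc, τ.comm₃, hσ, Category.assoc]
      _ = (θ ≫ σ ≫ T₀.mor₃) ≫ φa.hom₁⟦(1 : ℤ)⟧' := by simp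
  rw [← (CategoryTheory.shiftFunctor C (1 : ℤ)).map_eq_zero_iff, Functor.map_comp, hl']
  simp [comp_distTriang_mor_zero₃₁ T₀ hT₀]
lemma CategoryTheory.Pretriangulated.Triangle.exists_hom₂_comp_eq_of_factors
    {T₀ Ta Tb Tc : Triangle C} (hT₀ : T₀ ∈ distTriang C) (hTa : Ta ∈ distTriang C)
    (φa : T₀ ⟶ Ta) (φc : T₀ ⟶ Tc) (τ : Tb ⟶ Ta) (τ' : Ta ⟶ Tc) (hφ : φa ≫ τ' = φc) [Mono φa.hom₁]
    (σ₃ : Tb.obj₃ ⟶ T₀.obj₃) (hσ₃ : τ.hom₃ = σ₃ ≫ φa.hom₃)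
    (σ₁ : Ta.obj₁ ⟶ T₀.obj₁) (hσ₁ : τ'.hom₁ = σ₁ ≫ φc.hom₁) :
    ∃ σ : Tb.obj₂ ⟶ T₀.obj₂, τ.hom₂ ≫ τ'.hom₂ = σ ≫ φc.hom₂ := by
  have hτ : τ.hom₂ ≫ Ta.mor₂ = (Tb.mor₂ ≫ σ₃) ≫ φa.hom₃ := by
    rw [← τ.comm₂, hσ₃, Category.assoc]
  have hw : (Tb.mor₂ ≫ σ₃) ≫ T₀.mor₃ = 0 := by
    rw [← cancel_mono (φa.hom₁⟦(1 : ℤ)⟧'), Category.assoc, φa.comm₃, ← Category.assoc, ← hτ,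
      Category.assoc, comp_distTriang_mor_zero₂₃ Ta hTa]
    simp
  obtain ⟨α, hα⟩ := Triangle.coyoneda_exact₃ T₀ hT₀ _ hw
  have hv : (τ.hom₂ - α ≫ φa.hom₂) ≫ Ta.mor₂ = 0 := by
    rw [Preadditive.sub_comp, hτ, hα]
    simp
  obtain ⟨ρ, hρ⟩ := Triangle.coyoneda_exact₂ Ta hTa _ hv
  refine ⟨α + ρ ≫ σ₁ ≫ T₀.mor₁, ?_⟩
  rw [eq_add_of_sub_eq' hρ]
  have hφ₂ : φa.hom₂ ≫ τ'.hom₂ = φc.hom₂ := by rw [← comp_hom₂, hφ]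
  simp only [Preadditive.add_comp, Category.assoc, hφ₂, τ'.comm₁, hσ₁, φc.comm₁]

lemma nonempty_towerFiberData (Y : ℕ → C) (t : ∀ n, Y (n + 1) ⟶ Y n) (Yinf : C)
    (f : ∀ n, Yinf ⟶ Y n) (hc : ∀ n, f (n + 1) ≫ t n = f n) :
    Nonempty (TowerFiberData C Y t Yinf f) := by
  choose F ι δ tri using fun n => distinguished_cocone_triangle₁ (f n)
  choose ft comm sqδ using fun n =>
    complete_distinguished_triangle_morphism₁ _ _ (tri (n + 1)) (tri n) (𝟙 Yinf) (t n)
      ((hc n).trans (Category.id_comp _).symm)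
  exact ⟨⟨F, ft, ι, δ, tri, fun n => (comm n).symm.trans (Category.comp_id _),
    fun n => (sqδ n).symm⟩⟩

namespace TowerFiberData

variable {Y : ℕ → C} {t : ∀ n, Y (n + 1) ⟶ Y n} {Yinf : C} {f : ∀ n, Yinf ⟶ Y n}

lemma cmp_comp_ι_s9 (D : TowerFiberData C Y t Yinf f) (n k : ℕ) :
    D.cmp n k ≫ D.ι n = D.ι (n + k) := by
  induction k with
  | zero => exact Category.id_comp _
  | succ k ih => rw [cmp, Category.assoc, ih]; exact D.comm (n + k)

lemma cmp_eq_zero (D : TowerFiberData C Y t Yinf f) {n k : ℕ} (hι : D.ι (n + k) = 0)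
    (hδ : D.δ (n + k) ≫ (D.cmp n k)⟦(1 : ℤ)⟧' = 0) : D.cmp n k = 0 := by
  have : Epi (D.δ (n + k)) := Triangle.epi₃ _ (D.tri (n + k)) hι
  rw [← (shiftFunctor C (1 : ℤ)).map_eq_zero_iff, ← cancel_epi (D.δ (n + k)), hδ, comp_zero]

end TowerFiberData

lemma TowerFiberData.map_comp_δ {Y : ℕᵒᵖ ⥤ C} {Yinf : C} {f : ∀ n, Yinf ⟶ Y.obj (op n)}
    (D : TowerFiberData C (fun n => Y.obj (op n))
      (fun n => Y.map (homOfLE (Nat.le_add_right n 1)).op) Yinf f) (n k : ℕ) :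
    Y.map (homOfLE (Nat.le_add_right n k)).op ≫ D.δ n = D.δ (n + k) ≫ (D.cmp n k)⟦(1 : ℤ)⟧' := by
  induction k with
  | zero => simp [cmp]
  | succ k ih =>
    have hsplit : Y.map (homOfLE (Nat.le_add_right n (k + 1))).op =
        Y.map (homOfLE (Nat.le_add_right (n + k) 1)).op ≫
          Y.map (homOfLE (Nat.le_add_right n k)).op := by
      rw [← Y.map_comp]; rfl
    rw [hsplit, Category.assoc, ih, ← Category.assoc, D.sqδ, cmp, Functor.map_comp,
      Category.assoc]
    rfl

theorem rapidlyConvergent_iff_isRapidlyConvergent {Y : ℕᵒᵖ ⥤ C} (c : Cone Y)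
    (t : ∀ n, Y.obj (op (n + 1)) ⟶ Y.obj (op n))
    (ht : ∀ n, Y.map (homOfLE (Nat.le_add_right n 1)).op = t n) (d : ℕ) :
    RapidlyConvergent C (fun n => Y.obj (op n)) t c.pt (fun n => c.π.app (op n)) d ↔
      c.IsRapidlyConvergent d := by
  obtain rfl : (fun n => Y.map (homOfLE (Nat.le_add_right n 1)).op) = t := funext ht
  constructor
  · rintro ⟨D, hD⟩
    have hι : ∀ n, D.ι (n + d) = 0 := fun n => by rw [← D.cmp_comp_ι_s9, hD, zero_comp]
    refine ⟨fun j hj => ?_, fun i j h => ?_⟩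
    · obtain ⟨n, rfl⟩ : ∃ n, j = n + d := ⟨j - d, by omega⟩
      exact Triangle.mono₂ _ (D.tri _) (hι n)
    · have hδ : Y.map (homOfLE (Nat.le_add_right i d)).op ≫ D.δ i = 0 := by
        rw [D.map_comp_δ, hD, Functor.map_zero, comp_zero]
      obtain ⟨σ, hσ⟩ : ∃ σ : _ ⟶ c.pt, _ = σ ≫ c.π.app (op i) :=
        Triangle.coyoneda_exact₃ _ (D.tri i) _ hδ
      refine ⟨Y.map (homOfLE h).op ≫ σ, ?_⟩
      rw [Category.assoc, ← hσ, ← Y.map_comp]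
      rfl
  · intro hc
    obtain ⟨D⟩ := nonempty_towerFiberData (fun n => Y.obj (op n))
      (fun n => Y.map (homOfLE (Nat.le_add_right n 1)).op) c.pt (fun n => c.π.app (op n))
      fun n => c.w _
    refine ⟨D, fun n => D.cmp_eq_zero ?_ ?_⟩
    · exact Triangle.mor₁_eq_zero_of_mono₂ _ (D.tri _) (hc.mono_π (n + d) (Nat.le_add_left d n))
    · obtain ⟨σ, hσ⟩ := hc.exists_factor n (n + d) le_rfl
      have hfδ : c.π.app (op n) ≫ D.δ n = 0 := comp_distTriang_mor_zero₂₃ _ (D.tri n)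
      rw [← D.map_comp_δ, hσ, Category.assoc, hfδ, comp_zero]

theorem CategoryTheory.Pretriangulated.Triangle.isRapidlyConvergent_π₂_mapCone
    {T : ℕᵒᵖ ⥤ Triangle C} (c : Cone T) (hc : c.pt ∈ distTriang C)
    (hT : ∀ n, T.obj n ∈ distTriang C) {r r' : ℕ}
    (hX : (Triangle.π₁.mapCone c).IsRapidlyConvergent r)
    (hZ : (Triangle.π₃.mapCone c).IsRapidlyConvergent r') :
    (Triangle.π₂.mapCone c).IsRapidlyConvergent (r + r') := by
  refine ⟨fun j hj => ?_, fun i j h => ?_⟩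
  · have : Mono (c.π.app (op (j - r'))).hom₁ := hX.mono_π _ (by omega)
    have : Mono (c.π.app (op j)).hom₃ := hZ.mono_π _ (by omega)
    obtain ⟨σ, hσ⟩ := hZ.exists_factor (j - r') j (by omega)
    exact mono_hom₂_of_mono_of_factors hc (hT _) _ _ _ (c.w _) σ hσ
  · have : Mono (c.π.app (op (i + r))).hom₁ := hX.mono_π _ (Nat.le_add_left r i)
    obtain ⟨σ₃, hσ₃⟩ := hZ.exists_factor (i + r) j (by omega)
    obtain ⟨σ₁, hσ₁⟩ := hX.exists_factor i (i + r) le_rfl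
    obtain ⟨σ, hσ⟩ := exists_hom₂_comp_eq_of_factors hc (hT _) _ _ _ _ (c.w _) σ₃ hσ₃ σ₁ hσ₁
    refine ⟨σ, ?_⟩
    change (T.map _).hom₂ = σ ≫ (c.π.app (op i)).hom₂
    rw [← hσ, ← comp_hom₂, ← T.map_comp]
    rfl

end

/-- Let `X → Y → Z` be a cofibre sequence of towers in a stable ∞-category,
compatible with given maps from constant towers `X∞, Y∞, Z∞` which themselves form a cofibre
sequence.  If the tower for `X` is `r`-rapidly convergent and the tower for `Z` is
`r'`-rapidly convergent, then the tower for `Y` is `(r + r')`-rapidly convergent. -/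
theorem cofibre_sequence_of_towers_rapid_convergence
    [Preadditive C] [HasZeroObject C] [HasShift C ℤ]
    [∀ n : ℤ, (CategoryTheory.shiftFunctor C n).Additive] [Pretriangulated C]
    (X Y Z : ℕ → C)
    (tX : ∀ n, X (n + 1) ⟶ X n) (tY : ∀ n, Y (n + 1) ⟶ Y n) (tZ : ∀ n, Z (n + 1) ⟶ Z n)
    (Xinf Yinf Zinf : C)
    (fX : ∀ n, Xinf ⟶ X n) (fY : ∀ n, Yinf ⟶ Y n) (fZ : ∀ n, Zinf ⟶ Z n)
    (hcX : ∀ n, fX (n + 1) ≫ tX n = fX n) (hcY : ∀ n, fY (n + 1) ≫ tY n = fY n)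
    (hcZ : ∀ n, fZ (n + 1) ≫ tZ n = fZ n)
    -- the levelwise cofibre sequences
    (u : ∀ n, X n ⟶ Y n) (v : ∀ n, Y n ⟶ Z n) (w : ∀ n, Z n ⟶ (X n)⟦(1 : ℤ)⟧)
    (htri : ∀ n, Triangle.mk (u n) (v n) (w n) ∈ distTriang C)
    -- the cofibre sequence of the constant towers
    (uinf : Xinf ⟶ Yinf) (vinf : Yinf ⟶ Zinf) (winf : Zinf ⟶ Xinf⟦(1 : ℤ)⟧)
    (htriinf : Triangle.mk uinf vinf winf ∈ distTriang C)
    -- compatibility with the tower transition maps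
    (hu : ∀ n, tX n ≫ u n = u (n + 1) ≫ tY n)
    (hv : ∀ n, tY n ≫ v n = v (n + 1) ≫ tZ n)
    (hw : ∀ n, tZ n ≫ w n = w (n + 1) ≫ (CategoryTheory.shiftFunctor C (1 : ℤ)).map (tX n))
    -- compatibility with the maps from the constant towers
    (hfu : ∀ n, uinf ≫ fY n = fX n ≫ u n)
    (hfv : ∀ n, vinf ≫ fZ n = fY n ≫ v n)
    (hfw : ∀ n, fZ n ≫ w n = winf ≫ (CategoryTheory.shiftFunctor C (1 : ℤ)).map (fX n))
    (r r' : ℕ)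
    (hX : RapidlyConvergent C X tX Xinf fX r)
    (hZ : RapidlyConvergent C Z tZ Zinf fZ r') :
    RapidlyConvergent C Y tY Yinf fY (r + r') := by
  let L : ℕ → Triangle C := fun n => Triangle.mk (u n) (v n) (w n)
  let τ : ∀ n, L (n + 1) ⟶ L n := fun n =>
    Triangle.homMk _ _ (tX n) (tY n) (tZ n) (hu n).symm (hv n).symm (hw n).symm
  have hτ := Functor.ofOpSequence_map_homOfLE_succ τ
  let c : Cone (Functor.ofOpSequence τ) :=
    { pt := Triangle.mk uinf vinf winf
      π := NatTrans.ofOpSequence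
        (fun n => Triangle.homMk _ _ (fX n) (fY n) (fZ n) (hfu n) (hfv n) (hfw n).symm)
        fun n => by
          rw [hτ, Functor.const_obj_map]
          exact Triangle.hom_ext _ _ ((Category.id_comp _).trans (hcX n).symm)
            ((Category.id_comp _).trans (hcY n).symm) ((Category.id_comp _).trans (hcZ n).symm) }
  have hX' := (rapidlyConvergent_iff_isRapidlyConvergent (Triangle.π₁.mapCone c) tX
    (fun n => congrArg TriangleMorphism.hom₁ (hτ n)) r).1 hX
  have hZ' := (rapidlyConvergent_iff_isRapidlyConvergent (Triangle.π₃.mapCone c) tZ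
    (fun n => congrArg TriangleMorphism.hom₃ (hτ n)) r').1 hZ
  exact (rapidlyConvergent_iff_isRapidlyConvergent (Triangle.π₂.mapCone c) tY
    (fun n => congrArg TriangleMorphism.hom₂ (hτ n)) _).2
    (Triangle.isRapidlyConvergent_π₂_mapCone c htriinf (fun n => htri n.unop) hX' hZ')
end

section
/- Let C be a stable ∞-category admitting filtered colimits that commute with finite limits, and let q : I → Fun(Δ, C) be a filtered diagram of cosimplicial objects, each of which is d-rapidly convergent. Then the colimit cosimplicial object colim_I q is also d-rapidly convergent. -/
open CategoryTheory Limits Pretriangulated MonoidalCategory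

universe v u

variable (C : Type u) [Category.{v} C]

/-! The `d`-fold composites in a tower of fibres `F n ⟶ Yinf` of `f n` all vanish exactly when
every `f m` with `m ≥ d` is a monomorphism and the transition map `Y (n + d) ⟶ Y n` kills
whatever `f n` kills; neither condition refers to a choice of fibres. The second condition
passes to colimits by testing on the colimit inclusions. For the first, the pointwise cofibre
sequences `Yinf i ⟶ Y m i ⟶ Z i ⟶ 0` are cokernel sequences, so they assemble into a diagram,
and exactness of colimits gives a cofibre sequence for `colim f m` with zero connecting map. -/

variable {C}

def towerCmp (Y : ℕ → C) (t : ∀ n, Y (n + 1) ⟶ Y n) : ∀ n k : ℕ, Y (n + k) ⟶ Y n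
  | _, 0 => 𝟙 _
  | n, k + 1 => t (n + k) ≫ towerCmp Y t n k

section Colimits

variable {I : Type*} [Category I] [HasColimitsOfShape I C]

lemma ι_colimMap_towerCmp (G : ℕ → I ⥤ C) (τ : ∀ n, G (n + 1) ⟶ G n) (n k : ℕ)
    (i : I) :
    colimit.ι (G (n + k)) i ≫
        towerCmp (fun m => colimit (G m)) (fun m => colimMap (τ m)) n k =
      towerCmp (fun m => (G m).obj i) (fun m => (τ m).app i) n k ≫ colimit.ι (G n) i := by
  induction k with
  | zero => exact (Category.comp_id _).trans (Category.id_comp _).symm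
  | succ k ih =>
    change colimit.ι (G (n + k + 1)) i ≫ colimMap (τ (n + k)) ≫ _ =
      ((τ (n + k)).app i ≫ _) ≫ colimit.ι (G n) i
    rw [ι_colimMap_assoc, ih, Category.assoc]

lemma towerCmp_colimMap_comp_eq_zero [HasZeroMorphisms C] {G : ℕ → I ⥤ C}
    (τ : ∀ n, G (n + 1) ⟶ G n) {Ginf : I ⥤ C} (φ : ∀ n, Ginf ⟶ G n) (n d : ℕ)
    (h : ∀ i ⦃W : C⦄ (g : (G n).obj i ⟶ W),
      (φ n).app i ≫ g = 0 →
        towerCmp (fun m => (G m).obj i) (fun m => (τ m).app i) n d ≫ g = 0)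
    ⦃W : C⦄ (g : colimit (G n) ⟶ W) (hg : colimMap (φ n) ≫ g = 0) :
    towerCmp (fun m => colimit (G m)) (fun m => colimMap (τ m)) n d ≫ g = 0 := by
  refine colimit.hom_ext fun i => ?_
  rw [reassoc_of% ι_colimMap_towerCmp, h i _ (by rw [← ι_colimMap_assoc, hg, comp_zero]),
    comp_zero]

end Colimits

section Pretriangulated

variable [Preadditive C] [HasZeroObject C] [HasShift C ℤ]
  [∀ n : ℤ, (shiftFunctor C n).Additive] [Pretriangulated C]

section Fibres

variable {Y : ℕ → C} {t : ∀ n, Y (n + 1) ⟶ Y n} {Yinf : C} {f : ∀ n, Yinf ⟶ Y n}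

lemma TowerFiberData.cmp_comp_ι_s10 (D : TowerFiberData C Y t Yinf f) (n k : ℕ) :
    D.cmp n k ≫ D.ι n = D.ι (n + k) := by
  induction k with
  | zero => exact Category.id_comp _
  | succ k ih =>
    change (D.ft (n + k) ≫ D.cmp n k) ≫ D.ι n = D.ι (n + k + 1)
    rw [Category.assoc, ih, D.comm]

lemma TowerFiberData.towerCmp_comp_δ (D : TowerFiberData C Y t Yinf f) (n k : ℕ) :
    towerCmp Y t n k ≫ D.δ n = D.δ (n + k) ≫ (D.cmp n k)⟦(1 : ℤ)⟧' := by
  induction k with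
  | zero => simp [towerCmp, TowerFiberData.cmp]
  | succ k ih =>
    change (t (n + k) ≫ towerCmp Y t n k) ≫ D.δ n =
      D.δ (n + k + 1) ≫ (D.ft (n + k) ≫ D.cmp n k)⟦1⟧'
    rw [Category.assoc, ih, reassoc_of% (D.sqδ (n + k)), Functor.map_comp]

lemma TowerFiberData.cmp_eq_zero_iff (D : TowerFiberData C Y t Yinf f) (n d : ℕ) :
    D.cmp n d = 0 ↔ D.ι (n + d) = 0 ∧ towerCmp Y t n d ≫ D.δ n = 0 := by
  rw [D.towerCmp_comp_δ]
  constructor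
  · intro h
    rw [← D.cmp_comp_ι_s10, h]
    simp
  · rintro ⟨hι, hδ⟩
    have : Epi (D.δ (n + d)) := Triangle.epi₃ _ (D.tri (n + d)) hι
    apply (shiftFunctor C (1 : ℤ)).map_injective
    rw [Functor.map_zero, ← cancel_epi (D.δ (n + d)), hδ, comp_zero]

lemma TowerFiberData.nonempty (hf : ∀ n, f (n + 1) ≫ t n = f n) :
    Nonempty (TowerFiberData C Y t Yinf f) := by
  choose F ι δ tri using fun n => distinguished_cocone_triangle₁ (f n)
  choose ft comm sqδ using fun n => complete_distinguished_triangle_morphism₁ _ _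
    (tri (n + 1)) (tri n) (𝟙 Yinf) (t n) ((hf n).trans (Category.id_comp _).symm)
  exact ⟨{ F, ft, ι, δ, tri
           comm := fun n => (comm n).symm.trans (Category.comp_id _)
           sqδ := fun n => (sqδ n).symm }⟩

theorem rapidlyConvergent_iff (hf : ∀ n, f (n + 1) ≫ t n = f n) (d : ℕ) :
    RapidlyConvergent C Y t Yinf f d ↔
      (∀ m, d ≤ m → Mono (f m)) ∧
        ∀ n ⦃W : C⦄ (g : Y n ⟶ W), f n ≫ g = 0 → towerCmp Y t n d ≫ g = 0 := by
  have ι_eq_zero_iff (D : TowerFiberData C Y t Yinf f) (m : ℕ) : D.ι m = 0 ↔ Mono (f m) :=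
    Triangle.mor₁_eq_zero_iff_mono₂ _ (D.tri m)
  have kills_iff (D : TowerFiberData C Y t Yinf f) (n : ℕ) :
      towerCmp Y t n d ≫ D.δ n = 0 ↔
        ∀ ⦃W : C⦄ (g : Y n ⟶ W), f n ≫ g = 0 → towerCmp Y t n d ≫ g = 0 := by
    refine ⟨fun h W g hg => ?_, fun h => h _ (comp_distTriang_mor_zero₂₃ _ (D.tri n))⟩
    obtain ⟨σ, hσ⟩ : ∃ σ : Y (n + d) ⟶ Yinf, towerCmp Y t n d = σ ≫ f n :=
      Triangle.coyoneda_exact₃ _ (D.tri n) _ h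
    rw [hσ, Category.assoc, hg, comp_zero]
  constructor
  · rintro ⟨D, hD⟩
    refine ⟨fun m hm => ?_, fun n => (kills_iff D n).1 ((D.cmp_eq_zero_iff n d).1 (hD n)).2⟩
    obtain ⟨n, rfl⟩ := Nat.exists_eq_add_of_le' hm
    exact (ι_eq_zero_iff D _).1 ((D.cmp_eq_zero_iff n d).1 (hD n)).1
  · rintro ⟨hmono, hkill⟩
    obtain ⟨D⟩ := TowerFiberData.nonempty hf
    exact ⟨D, fun n => (D.cmp_eq_zero_iff n d).2
      ⟨(ι_eq_zero_iff D _).2 (hmono _ (Nat.le_add_left d n)), (kills_iff D n).2 (hkill n)⟩⟩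

end Fibres

section ExactColimits

variable {I : Type*} [Category I]

lemma exists_distTriang_app_of_mono_app {A B : I ⥤ C} (φ : A ⟶ B) [∀ i, Mono (φ.app i)] :
    ∃ (Z : I ⥤ C) (π : B ⟶ Z), ∀ i,
      Triangle.mk (φ.app i) (π.app i) (0 : Z.obj i ⟶ (A.obj i)⟦(1 : ℤ)⟧) ∈
        distTriang C := by
  choose Z π c hT using fun i => distinguished_cocone_triangle (φ.app i)
  have hc (i : I) : c i = 0 :=
    Triangle.mor₃_eq_zero_of_mono₁ _ (hT i) (inferInstanceAs (Mono (φ.app i)))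
  have hπ (i : I) : Epi (π i) := Triangle.epi₂ _ (hT i) (hc i)
  have hφπ (i : I) : φ.app i ≫ π i = 0 := comp_distTriang_mor_zero₁₂ _ (hT i)
  -- `π i` is a cokernel of `φ.app i`, which makes `i ↦ Z i` functorial
  have hdesc (i j : I) (α : i ⟶ j) : ∃ m : Z i ⟶ Z j, B.map α ≫ π j = π i ≫ m :=
    Triangle.yoneda_exact₂ _ (hT i) (B.map α ≫ π j)
      (show φ.app i ≫ B.map α ≫ π j = 0 by
        rw [← NatTrans.naturality_assoc, hφπ, comp_zero])
  choose map hmap using hdesc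
  refine ⟨{ obj := Z, map := map _ _, map_id := fun i => ?_, map_comp := fun α β => ?_ },
    { app := π, naturality := fun _ _ α => hmap _ _ α },
    fun i => by simpa only [hc i] using hT i⟩
  · apply (cancel_epi (π i)).1
    rw [← hmap, B.map_id, Category.id_comp, Category.comp_id]
  · apply (cancel_epi (π _)).1
    rw [← hmap, ← reassoc_of% (hmap _ _ α), ← hmap, B.map_comp, Category.assoc]

variable [HasColimitsOfShape I C] [PreservesColimitsOfShape I (shiftFunctor C (1 : ℤ))]

variable (C I) in
def ColimitsPreserveDistTriang : Prop :=
  ∀ (T₁ T₂ T₃ : I ⥤ C) (a : T₁ ⟶ T₂) (b : T₂ ⟶ T₃)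
    (c : T₃ ⟶ T₁ ⋙ shiftFunctor C (1 : ℤ)),
    (∀ i, Triangle.mk (a.app i) (b.app i) (c.app i) ∈ distTriang C) →
    Triangle.mk (colimMap a) (colimMap b)
      (colimMap c ≫ (preservesColimitIso (shiftFunctor C (1 : ℤ)) T₁).inv) ∈ distTriang C

lemma mono_colimMap_of_mono_app (hI : ColimitsPreserveDistTriang C I) {A B : I ⥤ C}
    (φ : A ⟶ B) [∀ i, Mono (φ.app i)] : Mono (colimMap φ) := by
  obtain ⟨Z, π, hT⟩ := exists_distTriang_app_of_mono_app φ
  have hdist := hI A B Z φ π 0 (by simpa only [NatTrans.app_zero] using hT)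
  have hzero : colimMap (0 : Z ⟶ A ⋙ shiftFunctor C (1 : ℤ)) = 0 := by
    ext i
    simp
  rw [hzero, zero_comp] at hdist
  exact Triangle.mono₁ _ hdist rfl

end ExactColimits

end Pretriangulated

variable (C)

/-- Let `C` be a stable ∞-category admitting filtered colimits which commute
with finite limits (encoded below by the exactness hypothesis `hexact` and the preservation of
the shift), and let `q : I → Fun(Δ, C)` be a filtered diagram of `d`-rapidly convergent
cosimplicial objects.  Then the colimit cosimplicial object is `d`-rapidly convergent.
(Formulated at the level of the associated `Tot`-towers: a filtered colimit of `d`-rapidly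
convergent towers is `d`-rapidly convergent.) -/
theorem filtered_colimit_of_rapidly_convergent
    [Preadditive C] [HasZeroObject C] [HasShift C ℤ]
    [∀ n : ℤ, (CategoryTheory.shiftFunctor C n).Additive] [Pretriangulated C]
    (I : Type*) [SmallCategory I] [IsFiltered I]
    [HasColimitsOfShape I C]
    [PreservesColimitsOfShape I (CategoryTheory.shiftFunctor C (1 : ℤ))]
    -- filtered colimits commute with finite limits: they preserve cofibre sequences
    (hexact : ∀ (T₁ T₂ T₃ : I ⥤ C) (a : T₁ ⟶ T₂) (b : T₂ ⟶ T₃)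
      (c : T₃ ⟶ T₁ ⋙ CategoryTheory.shiftFunctor C (1 : ℤ)),
      (∀ i, Triangle.mk (a.app i) (b.app i) (c.app i) ∈ distTriang C) →
      Triangle.mk (colimMap a) (colimMap b)
        (colimMap c ≫ (preservesColimitIso (CategoryTheory.shiftFunctor C (1 : ℤ)) T₁).inv)
        ∈ distTriang C)
    -- a filtered diagram of towers (the `Tot`-towers of the cosimplicial objects `q i`)
    (G : ℕ → I ⥤ C) (τ : ∀ n, G (n + 1) ⟶ G n)
    (Ginf : I ⥤ C) (φ : ∀ n, Ginf ⟶ G n)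
    (hcompat : ∀ n, φ (n + 1) ≫ τ n = φ n)
    (d : ℕ)
    -- each cosimplicial object of the diagram is `d`-rapidly convergent
    (h : ∀ i : I, RapidlyConvergent C (fun n => (G n).obj i) (fun n => (τ n).app i)
      (Ginf.obj i) (fun n => (φ n).app i) d) :
    -- then so is the colimit
    RapidlyConvergent C (fun n => colimit (G n)) (fun n => colimMap (τ n))
      (colimit Ginf) (fun n => colimMap (φ n)) d := by
  have hcompat_app (i : I) (n : ℕ) : (φ (n + 1)).app i ≫ (τ n).app i = (φ n).app i := by
    rw [← NatTrans.comp_app, hcompat]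
  have hcompat_colim (n : ℕ) : colimMap (φ (n + 1)) ≫ colimMap (τ n) = colimMap (φ n) := by
    refine colimit.hom_ext fun i => ?_
    rw [ι_colimMap_assoc, ι_colimMap, ι_colimMap, reassoc_of% hcompat_app]
  have hpointwise := fun i => (rapidlyConvergent_iff (hcompat_app i) d).1 (h i)
  refine (rapidlyConvergent_iff hcompat_colim d).2 ⟨fun m hm => ?_, fun n => ?_⟩
  · have (i : I) : Mono ((φ m).app i) := (hpointwise i).1 m hm
    exact mono_colimMap_of_mono_app hexact (φ m)
  · exact towerCmp_colimMap_comp_eq_zero τ φ n d fun i => (hpointwise i).2 n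
end

section
/- Let C be a stable ∞-category with sequential limits, and {Y_n} a tower that is d-rapidly convergent to Y_∞. Then for any exact functor F : C → D to a stable ∞-category D with sequential limits, the natural map F(Y_∞) → lim_n F(Y_n) is an equivalence. -/
open CategoryTheory Limits Pretriangulated MonoidalCategory

universe v u

variable (C : Type u) [Category.{v} C]

/-!
An exact functor preserves fibre sequences and null maps, so `F(Y n)` is again `d`-rapidly
convergent to `F(Y∞)`; it remains to see that rapid convergence alone makes `Y∞` the limit. With
fibres `K n → Y∞ → Y n`, the map `K d → Y∞` is the null composite `K d → K 0 → Y∞`, so `Y∞ → Y d`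
is mono. A map `s → Y n` belonging to a cone factors through `Y∞`, because its composite with the
boundary `Y n → K n⟦1⟧` factors through the null map `(K (n + d) → K n)⟦1⟧`. A cone over a
cofiltered diagram with one monic leg through which all such legs factor is a limit cone.
-/

namespace CategoryTheory.Limits.Cone

variable {C} {J : Type*} [Category J] [IsCofiltered J] {K : J ⥤ C}

theorem nonempty_isLimit_of_mono_of_forall_factors (c : Cone K) (j₀ : J) [Mono (c.π.app j₀)]
    (hfac : ∀ (s : Cone K) (j : J), ∃ l : s.pt ⟶ c.pt, l ≫ c.π.app j = s.π.app j) :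
    Nonempty (IsLimit c) := by
  choose lift hlift using hfac
  refine ⟨IsLimit.mk (fun s => lift s j₀) (fun s j => ?_) (fun s m hm => ?_)⟩
  · let k := IsCofiltered.min j j₀
    have hk : lift s k = lift s j₀ := by
      rw [← cancel_mono (c.π.app j₀), hlift, ← c.w (IsCofiltered.minToRight j j₀),
        ← Category.assoc, hlift, s.w]
    rw [← hk, ← c.w (IsCofiltered.minToLeft j j₀), ← Category.assoc, hlift, s.w]
  · rw [← cancel_mono (c.π.app j₀), hm, hlift]

end CategoryTheory.Limits.Cone

section Tower

variable {C} {Y : ℕ → C} {Yinf : C}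

theorem CategoryTheory.Functor.ofOpSequence_map_homOfLE_add_succ
    (t : ∀ n, Y (n + 1) ⟶ Y n) (n k : ℕ) :
    (ofOpSequence t).map (homOfLE (Nat.le_add_right n (k + 1))).op =
      t (n + k) ≫ (ofOpSequence t).map (homOfLE (Nat.le_add_right n k)).op := by
  rw [← homOfLE_comp (Nat.le_add_right n k) (Nat.le_add_right (n + k) 1), op_comp,
    Functor.map_comp, Functor.ofOpSequence_map_homOfLE_succ]
  rfl

def towerCone (t : ∀ n, Y (n + 1) ⟶ Y n) (f : ∀ n, Yinf ⟶ Y n)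
    (hc : ∀ n, f (n + 1) ≫ t n = f n) : Cone (Functor.ofOpSequence t) where
  pt := Yinf
  π := NatTrans.ofOpSequence f fun n => by
    rw [Functor.ofOpSequence_map_homOfLE_succ]
    exact (Category.id_comp _).trans (hc n).symm

end Tower

section Pretriangulated

variable {C} [Preadditive C] [HasZeroObject C] [HasShift C ℤ]
  [∀ n : ℤ, (shiftFunctor C n).Additive] [Pretriangulated C]
  {Y : ℕ → C} {t : ∀ n, Y (n + 1) ⟶ Y n} {Yinf : C} {f : ∀ n, Yinf ⟶ Y n}

namespace TowerFiberData

variable (Φ : TowerFiberData C Y t Yinf f)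

theorem cmp_ι (n k : ℕ) : Φ.cmp n k ≫ Φ.ι n = Φ.ι (n + k) := by
  induction k with
  | zero => simp [cmp]
  | succ k ih =>
    rw [cmp, Category.assoc, ih]
    exact Φ.comm (n + k)

-- `erw`: the objects `(Functor.ofOpSequence t).obj (op n)` and `Y n` agree only up to unfolding.
theorem ofOpSequence_map_δ (n k : ℕ) :
    (Functor.ofOpSequence t).map (homOfLE (Nat.le_add_right n k)).op ≫ Φ.δ n =
      Φ.δ (n + k) ≫ (Φ.cmp n k)⟦(1 : ℤ)⟧' := by
  induction k with
  | zero =>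
    simp only [Nat.add_zero, homOfLE_refl, op_id, CategoryTheory.Functor.map_id, cmp,
      Category.comp_id]
    erw [Category.id_comp]
  | succ k ih =>
    rw [Functor.ofOpSequence_map_homOfLE_add_succ]
    erw [Category.assoc, ih, reassoc_of% Φ.sqδ, ← Functor.map_comp]
    rfl

end TowerFiberData

theorem RapidlyConvergent.nonempty_isLimit_towerCone (hc : ∀ n, f (n + 1) ≫ t n = f n) {d : ℕ}
    (h : RapidlyConvergent C Y t Yinf f d) : Nonempty (IsLimit (towerCone t f hc)) := by
  obtain ⟨Φ, hΦ⟩ := h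
  have hι : Φ.ι d = 0 := by
    have h0 := Φ.cmp_ι 0 d
    rw [hΦ 0, zero_comp, zero_add] at h0
    exact h0.symm
  have : Mono ((towerCone t f hc).π.app (Opposite.op d)) := Triangle.mono₂ _ (Φ.tri d) hι
  refine (towerCone t f hc).nonempty_isLimit_of_mono_of_forall_factors (Opposite.op d)
    fun s ⟨n⟩ => ?_
  have hδ : s.π.app (Opposite.op n) ≫ Φ.δ n = 0 := by
    rw [← s.w (homOfLE (Nat.le_add_right n d)).op]
    erw [Category.assoc, Φ.ofOpSequence_map_δ]
    rw [hΦ, Functor.map_zero, comp_zero]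
    exact comp_zero
  obtain ⟨l, hl⟩ := Triangle.coyoneda_exact₃ _ (Φ.tri n) _ hδ
  exact ⟨l, hl.symm⟩

variable {D : Type*} [Category D] [Preadditive D] [HasZeroObject D] [HasShift D ℤ]
  [∀ n : ℤ, (shiftFunctor D n).Additive] [Pretriangulated D]
  (F : C ⥤ D) [F.CommShift ℤ] [F.IsTriangulated]

namespace TowerFiberData

variable (Φ : TowerFiberData C Y t Yinf f)

def map : TowerFiberData D (fun n => F.obj (Y n)) (fun n => F.map (t n)) (F.obj Yinf)
    (fun n => F.map (f n)) where
  F n := F.obj (Φ.F n)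
  ft n := F.map (Φ.ft n)
  ι n := F.map (Φ.ι n)
  δ n := F.map (Φ.δ n) ≫ (F.commShiftIso (1 : ℤ)).hom.app (Φ.F n)
  tri n := F.map_distinguished _ (Φ.tri n)
  comm n := by rw [← F.map_comp, Φ.comm]
  sqδ n := by
    rw [← F.map_comp_assoc, Φ.sqδ, F.map_comp_assoc, F.commShiftIso_hom_naturality,
      Category.assoc]

theorem map_cmp (n k : ℕ) : (Φ.map F).cmp n k = F.map (Φ.cmp n k) := by
  induction k with
  | zero => exact (F.map_id _).symm
  | succ k ih =>
    rw [cmp, cmp, ih, F.map_comp]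
    rfl

end TowerFiberData

theorem RapidlyConvergent.map {d : ℕ} (h : RapidlyConvergent C Y t Yinf f d) :
    RapidlyConvergent D (fun n => F.obj (Y n)) (fun n => F.map (t n)) (F.obj Yinf)
      (fun n => F.map (f n)) d := by
  obtain ⟨Φ, hΦ⟩ := h
  exact ⟨Φ.map F, fun n => by rw [Φ.map_cmp F, hΦ]; exact F.map_zero _ _⟩

end Pretriangulated

/-- Let `{Y n}` be a tower in a stable ∞-category `C` which is `d`-rapidly
convergent to `Y∞`.  Then for any exact functor `F : C ⥤ D`, the natural map
`F(Y∞) → lim_n F(Y n)` is an equivalence: the cone on `F(Y∞)` with legs `F(f n)` is a limit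
cone. -/
theorem exact_functor_preserves_rapidly_convergent_limit
    [Preadditive C] [HasZeroObject C] [HasShift C ℤ]
    [∀ n : ℤ, (CategoryTheory.shiftFunctor C n).Additive] [Pretriangulated C]
    (D : Type*) [Category D] [Preadditive D] [HasZeroObject D] [HasShift D ℤ]
    [∀ n : ℤ, (CategoryTheory.shiftFunctor D n).Additive] [Pretriangulated D]
    [HasLimitsOfShape ℕᵒᵖ D]
    (F : C ⥤ D) [F.CommShift ℤ] [F.IsTriangulated]
    (Y : ℕ → C) (t : ∀ n, Y (n + 1) ⟶ Y n) (Yinf : C) (f : ∀ n, Yinf ⟶ Y n)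
    (hc : ∀ n, f (n + 1) ≫ t n = f n)
    (d : ℕ) (h : RapidlyConvergent C Y t Yinf f d) :
    ∃ c : Cone ((CategoryTheory.Functor.ofSequence
        (fun n => (F.map (t n)).op : ∀ n, Opposite.op (F.obj (Y n)) ⟶
          Opposite.op (F.obj (Y (n + 1))))).leftOp),
      Nonempty (IsLimit c) ∧
      ∃ e : c.pt ≅ F.obj Yinf,
        ∀ n : ℕ, c.π.app (Opposite.op n) = e.hom ≫ F.map (f n) := by
  have hFc : ∀ n, F.map (f (n + 1)) ≫ F.map (t n) = F.map (f n) := fun n => by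
    rw [← F.map_comp, hc]
  exact ⟨towerCone _ _ hFc, (h.map F).nonempty_isLimit_towerCone hFc, Iso.refl _,
    fun n => (Category.id_comp _).symm⟩
end
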